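/- Let X(P2) = (m−1)/(2α(mN−N+2)) and Y(P2) = 1/(α(mN−N+2)). Let T ∈ (0,∞], and let (X,Y,Z) : [0,T) → ℝ³ be a differentiable solution of the system (PSsyst1) such that X(t) ≥ 0 and Z(t) ≥ 0 for all t ∈ [0,T), and such that X(0) < X(P2) and Y(0) < Y(P2). Then X(t) < X(P2) and Y(t) < Y(P2) for all t ∈ [0,T); that is, the region {0 ≤ X < X(P2), Y < Y(P2), Z ≥ 0} is positively invariant for (PSsyst1). -/

import Mathlib

open Real Filter Set Topology

noncomputable def alphaC (m p σ : ℝ) : ℝ := (σ + 2) / (σ * (m - 1) + 2 * (p - 1))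

noncomputable def betaC (m p σ : ℝ) : ℝ := (m - p) / (σ * (m - 1) + 2 * (p - 1))

/-!
`P2 = (a, b, 0)` is an equilibrium with `(m - 1) b = 2 a`. Let `c` be the first time at which a
solution starting in the box `{X < a, Y < b}` reaches its boundary. On the face `X = a, Y < b`
one has `Ẋ = a ((m - 1) Y - 2 a) < 0`, so the solution cannot leave there. On the face `Y = b`
one has `Ẏ = (X - a) (1 - N b) - Z ≤ 0`, with equality only at `P2` itself; so the solution would
reach the equilibrium `P2` at time `c`. This is excluded by a Gronwall argument: on the closed box
the gap `W = (a - X) + (b - Y) + Z ≥ 0` satisfies `Ẇ ≥ -K W`, hence `W(c) ≥ W(0) e^{-K c} > 0`.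
-/

theorem IsMaxOn.hasDerivWithinAt_Icc_right_nonneg {f : ℝ → ℝ} {f' a b : ℝ} (hab : a < b)
    (hmax : IsMaxOn f (Icc a b) b) (hf : HasDerivWithinAt f f' (Icc a b) b) : 0 ≤ f' := by
  have hcone : a - b ∈ posTangentConeAt (Icc a b) b :=
    sub_mem_posTangentConeAt_of_segment_subset (by rw [segment_symm, segment_eq_Icc hab.le])
  have := hmax.localize.hasFDerivWithinAt_nonpos hf.hasFDerivWithinAt hcone
  rw [ContinuousLinearMap.toSpanSingleton_apply, smul_eq_mul] at this
  nlinarith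

theorem pos_of_hasDerivWithinAt_ge_neg_mul {W W' : ℝ → ℝ} {K a b : ℝ} (hab : a ≤ b)
    (hW : ∀ t ∈ Icc a b, HasDerivWithinAt W (W' t) (Icc a b) t)
    (hW' : ∀ t ∈ Ioo a b, -(K * W t) ≤ W' t) (ha : 0 < W a) : 0 < W b := by
  have hd : ∀ t ∈ Icc a b, HasDerivWithinAt (fun t => W t * exp (K * t))
      ((W' t + K * W t) * exp (K * t)) (Icc a b) t := by
    intro t ht
    exact ((hW t ht).mul ((hasDerivWithinAt_id t _).const_mul K).exp).congr_deriv
      (by simp only [id, mul_one]; ring)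
  have hmono : MonotoneOn (fun t => W t * exp (K * t)) (Icc a b) := by
    refine monotoneOn_of_hasDerivWithinAt_nonneg (f' := fun t => (W' t + K * W t) * exp (K * t))
      (convex_Icc a b)
      (fun t ht => (hd t ht).continuousWithinAt) (fun t ht => ?_) (fun t ht => ?_)
    · rw [interior_Icc] at ht ⊢
      exact (hd t (Ioo_subset_Icc_self ht)).mono Ioo_subset_Icc_self
    · rw [interior_Icc] at ht
      exact mul_nonneg (by linarith [hW' t ht]) (exp_pos _).le
  have hab' : W a * exp (K * a) ≤ W b * exp (K * b) :=
    hmono (left_mem_Icc.2 hab) (right_mem_Icc.2 hab) hab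
  exact (mul_pos_iff_of_pos_right (exp_pos _)).1 ((mul_pos ha (exp_pos _)).trans_le hab')

theorem exists_first_mem_of_isClosed {s : Set ℝ} {a b : ℝ} (hs : IsClosed s) (hb : b ∈ s)
    (hab : a ≤ b) : ∃ c ∈ Icc a b, c ∈ s ∧ ∀ t ∈ Ico a c, t ∉ s := by
  have hne : (s ∩ Icc a b).Nonempty := ⟨b, hb, hab, le_rfl⟩
  have hbdd : BddBelow (s ∩ Icc a b) := ⟨a, fun t ht => ht.2.1⟩
  obtain ⟨hcs, hc⟩ := (hs.inter isClosed_Icc).csInf_mem hne hbdd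
  refine ⟨_, hc, hcs, fun t ht hts => ?_⟩
  exact (csInf_le hbdd ⟨hts, ht.1, ht.2.le.trans hc.2⟩).not_gt ht.2

theorem exists_first_exit_of_continuousOn {X Y : ℝ → ℝ} {a b t₀ t₁ : ℝ} (ht : t₀ ≤ t₁)
    (hX : ContinuousOn X (Icc t₀ t₁)) (hY : ContinuousOn Y (Icc t₀ t₁)) (hX₀ : X t₀ < a)
    (hY₀ : Y t₀ < b) (hexit : ¬(X t₁ < a ∧ Y t₁ < b)) :
    ∃ c ∈ Ioc t₀ t₁, (X c = a ∨ Y c = b) ∧ ∀ t ∈ Icc t₀ c, X t ≤ a ∧ Y t ≤ b := by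
  set s := Icc t₀ t₁ ∩ X ⁻¹' Ici a ∪ Icc t₀ t₁ ∩ Y ⁻¹' Ici b
  have hs : IsClosed s :=
    (hX.preimage_isClosed_of_isClosed isClosed_Icc isClosed_Ici).union
      (hY.preimage_isClosed_of_isClosed isClosed_Icc isClosed_Ici)
  have ht₁s : t₁ ∈ s := by
    rw [not_and_or, not_lt, not_lt] at hexit
    exact hexit.imp (⟨⟨ht, le_rfl⟩, ·⟩) (⟨⟨ht, le_rfl⟩, ·⟩)
  obtain ⟨c, hc, hcs, hbefore⟩ := exists_first_mem_of_isClosed hs ht₁s ht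
  have hcs' : a ≤ X c ∨ b ≤ Y c := hcs.imp And.right And.right
  replace hbefore : ∀ t ∈ Ico t₀ c, X t < a ∧ Y t < b := fun t ht' => by
    have hts : t ∈ Icc t₀ t₁ := ⟨ht'.1, ht'.2.le.trans hc.2⟩
    simpa [s, hts] using hbefore t ht'
  have htc : t₀ < c := hc.1.lt_of_ne <| by
    rintro rfl
    rcases hcs' with h | h <;> linarith
  have hclosure : c ∈ closure (Ico t₀ c) := by rw [closure_Ico htc.ne]; exact right_mem_Icc.2 hc.1
  have hIco : Ico t₀ c ⊆ Icc t₀ t₁ := Ico_subset_Icc_self.trans (Icc_subset_Icc_right hc.2)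
  have hXc : X c ≤ a := ContinuousWithinAt.closure_le hclosure ((hX c hc).mono hIco)
    continuousWithinAt_const fun t ht' => (hbefore t ht').1.le
  have hYc : Y c ≤ b := ContinuousWithinAt.closure_le hclosure ((hY c hc).mono hIco)
    continuousWithinAt_const fun t ht' => (hbefore t ht').2.le
  refine ⟨c, ⟨htc, hc.2⟩, hcs'.imp hXc.antisymm hYc.antisymm, fun t ht' => ?_⟩
  rcases ht'.2.eq_or_lt with rfl | h
  · exact ⟨hXc, hYc⟩
  · exact (hbefore t ⟨ht'.1, h⟩).imp le_of_lt le_of_lt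

namespace PSSyst1

variable {m p σ N R a b : ℝ} {X Y Z : ℝ → ℝ}

def dotX (m x y : ℝ) : ℝ := x * ((m - 1) * y - 2 * x)

def dotY (N R x y z : ℝ) : ℝ := -y ^ 2 - R * y + x - N * x * y - z

def dotZ (m p σ x y z : ℝ) : ℝ := z * ((m + p - 2) * y + (σ - 2) * x)

/-- `R` stands for the coefficient `β / α` of (PSsyst1). -/
def IsSolutionOn (m p σ N R : ℝ) (X Y Z : ℝ → ℝ) (s : Set ℝ) : Prop :=
  ∀ t ∈ s, HasDerivWithinAt X (dotX m (X t) (Y t)) s t ∧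
    HasDerivWithinAt Y (dotY N R (X t) (Y t) (Z t)) s t ∧
    HasDerivWithinAt Z (dotZ m p σ (X t) (Y t) (Z t)) s t

theorem IsSolutionOn.mono {s s' : Set ℝ} (h : IsSolutionOn m p σ N R X Y Z s) (hs' : s' ⊆ s) :
    IsSolutionOn m p σ N R X Y Z s' := fun t ht =>
  let ⟨hX, hY, hZ⟩ := h t (hs' ht)
  ⟨hX.mono hs', hY.mono hs', hZ.mono hs'⟩

theorem IsSolutionOn.continuousOn_X {s : Set ℝ} (h : IsSolutionOn m p σ N R X Y Z s) :
    ContinuousOn X s := fun t ht => (h t ht).1.continuousWithinAt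

theorem IsSolutionOn.continuousOn_Y {s : Set ℝ} (h : IsSolutionOn m p σ N R X Y Z s) :
    ContinuousOn Y s := fun t ht => (h t ht).2.1.continuousWithinAt

theorem dotY_eq_of_equilibrium (hP2 : dotY N R a b 0 = 0) (x z : ℝ) :
    dotY N R x b z = (x - a) * (1 - N * b) - z := by
  unfold dotY at *
  linear_combination hP2

theorem dotX_neg_of_lt {y : ℝ} (hm : 1 < m) (ha : 0 < a) (hab : (m - 1) * b = 2 * a)
    (hy : y < b) : dotX m a y < 0 := by
  have : (m - 1) * y < 2 * a := hab ▸ mul_lt_mul_of_pos_left hy (sub_pos.2 hm)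
  exact mul_neg_of_pos_of_neg ha (by linarith)

theorem eq_of_dotY_nonneg {x z : ℝ} (hP2 : dotY N R a b 0 = 0) (hNb : N * b < 1) (hx : x ≤ a)
    (hz : 0 ≤ z) (h : 0 ≤ dotY N R x b z) : x = a ∧ z = 0 := by
  rw [dotY_eq_of_equilibrium hP2] at h
  have : 0 ≤ (a - x) * (1 - N * b) := mul_nonneg (by linarith) (by linarith)
  constructor <;> nlinarith

theorem neg_mul_gap_le_deriv_gap {K x y z : ℝ} (hm : 1 ≤ m) (hab : (m - 1) * b = 2 * a)
    (hP2 : dotY N R a b 0 = 0) (hNb : N * b ≤ 1) (hx : 0 ≤ x) (hxa : x ≤ a) (hyb : y ≤ b)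
    (hz : 0 ≤ z) (hKx : 2 * a ≤ K) (hKy : y + b + R + N * x ≤ K)
    (hKz : -1 - ((m + p - 2) * y + (σ - 2) * x) ≤ K) :
    -(K * ((a - x) + (b - y) + z)) ≤ -dotX m x y - dotY N R x y z + dotZ m p σ x y z := by
  -- every summand is nonnegative on the closed box; this dictates the three lower bounds on `K`
  have key : -dotX m x y - dotY N R x y z + dotZ m p σ x y z + K * ((a - x) + (b - y) + z) =
      x * (m - 1) * (b - y) + (1 - N * b) * (a - x) + (K - 2 * x) * (a - x)
        + (K - (y + b + R + N * x)) * (b - y) + z * (1 + ((m + p - 2) * y + (σ - 2) * x) + K) := by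
    unfold dotX dotY dotZ at *
    linear_combination -hP2 - x * hab
  have h1 : 0 ≤ x * (m - 1) * (b - y) := by apply mul_nonneg <;> nlinarith
  have h2 : 0 ≤ (1 - N * b) * (a - x) := mul_nonneg (by linarith) (by linarith)
  have h3 : 0 ≤ (K - 2 * x) * (a - x) := mul_nonneg (by linarith) (by linarith)
  have h4 : 0 ≤ (K - (y + b + R + N * x)) * (b - y) := mul_nonneg (by linarith) (by linarith)
  have h5 : 0 ≤ z * (1 + ((m + p - 2) * y + (σ - 2) * x) + K) := mul_nonneg hz (by linarith)
  linarith

theorem IsSolutionOn.gap_pos {t₀ t₁ : ℝ} (hsol : IsSolutionOn m p σ N R X Y Z (Icc t₀ t₁))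
    (ht : t₀ ≤ t₁) (hm : 1 ≤ m) (hab : (m - 1) * b = 2 * a) (hP2 : dotY N R a b 0 = 0)
    (hNb : N * b ≤ 1) (hX : ∀ t ∈ Icc t₀ t₁, 0 ≤ X t ∧ X t ≤ a) (hY : ∀ t ∈ Icc t₀ t₁, Y t ≤ b)
    (hZ : ∀ t ∈ Icc t₀ t₁, 0 ≤ Z t) (h₀ : 0 < (a - X t₀) + (b - Y t₀) + Z t₀) :
    0 < (a - X t₁) + (b - Y t₁) + Z t₁ := by
  have hXc := hsol.continuousOn_X
  have hYc := hsol.continuousOn_Y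
  obtain ⟨Ky, hKy⟩ := isCompact_Icc.bddAbove_image (f := fun t => Y t + b + R + N * X t)
    (by fun_prop)
  obtain ⟨Kz, hKz⟩ := isCompact_Icc.bddAbove_image
    (f := fun t => -1 - ((m + p - 2) * Y t + (σ - 2) * X t)) (by fun_prop)
  refine pos_of_hasDerivWithinAt_ge_neg_mul (W := fun t => (a - X t) + (b - Y t) + Z t)
    (K := max (2 * a) (max Ky Kz)) ht
    (fun t ht => (((hsol t ht).1.const_sub a).add ((hsol t ht).2.1.const_sub b)).add
      (hsol t ht).2.2) (fun t ht => ?_) h₀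
  have ht' := Ioo_subset_Icc_self ht
  have := neg_mul_gap_le_deriv_gap (p := p) (σ := σ) (K := max (2 * a) (max Ky Kz)) hm hab hP2
    hNb (hX t ht').1 (hX t ht').2 (hY t ht') (hZ t ht') (le_max_left _ _)
    ((hKy ⟨t, ht', rfl⟩).trans ((le_max_left _ _).trans (le_max_right _ _)))
    ((hKz ⟨t, ht', rfl⟩).trans ((le_max_right _ _).trans (le_max_right _ _)))
  linarith

theorem IsSolutionOn.lt_of_lt_initial {t₀ t₁ : ℝ}
    (hsol : IsSolutionOn m p σ N R X Y Z (Icc t₀ t₁)) (ht : t₀ ≤ t₁) (hm : 1 < m) (ha : 0 < a)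
    (hab : (m - 1) * b = 2 * a) (hP2 : dotY N R a b 0 = 0) (hNb : N * b < 1)
    (hX : ∀ t ∈ Icc t₀ t₁, 0 ≤ X t) (hZ : ∀ t ∈ Icc t₀ t₁, 0 ≤ Z t) (hX₀ : X t₀ < a)
    (hY₀ : Y t₀ < b) : X t₁ < a ∧ Y t₁ < b := by
  by_contra hexit
  obtain ⟨c, ⟨htc, hct₁⟩, hface, hbox⟩ := exists_first_exit_of_continuousOn ht
    hsol.continuousOn_X hsol.continuousOn_Y hX₀ hY₀ hexit
  have hsub : Icc t₀ c ⊆ Icc t₀ t₁ := Icc_subset_Icc_right hct₁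
  have hsolc := hsol.mono hsub
  have hcc : c ∈ Icc t₀ c := right_mem_Icc.2 htc.le
  rcases (hbox c hcc).2.lt_or_eq with hYc | hYc
  · have hXc : X c = a := hface.resolve_right hYc.ne
    have hdX := IsMaxOn.hasDerivWithinAt_Icc_right_nonneg htc
      (isMaxOn_iff.2 fun t ht' => hXc ▸ (hbox t ht').1) (hsolc c hcc).1
    rw [hXc] at hdX
    exact (dotX_neg_of_lt hm ha hab hYc).not_ge hdX
  · have hdY := IsMaxOn.hasDerivWithinAt_Icc_right_nonneg htc
      (isMaxOn_iff.2 fun t ht' => hYc ▸ (hbox t ht').2) (hsolc c hcc).2.1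
    rw [hYc] at hdY
    obtain ⟨hXc, hZc⟩ := eq_of_dotY_nonneg hP2 hNb (hbox c hcc).1 (hZ c (hsub hcc)) hdY
    have hgap := hsolc.gap_pos htc.le hm.le hab hP2 hNb.le
      (fun t ht' => ⟨hX t (hsub ht'), (hbox t ht').1⟩) (fun t ht' => (hbox t ht').2)
      (fun t ht' => hZ t (hsub ht')) (by linarith [hZ t₀ (left_mem_Icc.2 ht)])
    rw [hXc, hYc, hZc] at hgap
    simp at hgap

end PSSyst1

section P2

variable {m p σ N : ℝ}

noncomputable def xP2 (m p σ N : ℝ) : ℝ := (m - 1) / (2 * alphaC m p σ * (m * N - N + 2))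

noncomputable def yP2 (m p σ N : ℝ) : ℝ := 1 / (alphaC m p σ * (m * N - N + 2))

theorem alphaC_denom_pos (hm : 1 < m) (hσ : 2 * (1 - p) / (m - 1) < σ) :
    0 < σ * (m - 1) + 2 * (p - 1) := by
  linarith [(div_lt_iff₀ (sub_pos.2 hm)).1 hσ]

theorem sigma_add_two_pos (hm : 1 < m) (hp : p < 1) (hσ : 2 * (1 - p) / (m - 1) < σ) :
    0 < σ + 2 := by
  nlinarith [alphaC_denom_pos hm hσ]

theorem alphaC_pos (hm : 1 < m) (hp : p < 1) (hσ : 2 * (1 - p) / (m - 1) < σ) :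
    0 < alphaC m p σ :=
  div_pos (sigma_add_two_pos hm hp hσ) (alphaC_denom_pos hm hσ)

theorem xP2_pos (hm : 1 < m) (hp : p < 1) (hσ : 2 * (1 - p) / (m - 1) < σ) (hN : 0 ≤ N) :
    0 < xP2 m p σ N := by
  have hM : 0 < m * N - N + 2 := by nlinarith
  exact div_pos (sub_pos.2 hm) (by positivity [alphaC_pos hm hp hσ])

theorem sub_one_mul_yP2 : (m - 1) * yP2 m p σ N = 2 * xP2 m p σ N := by
  rw [xP2, yP2, mul_assoc 2, ← div_div (m - 1)]
  ring

theorem mul_yP2_lt_one (hm : 1 < m) (hp : p < 1) (hσ : 2 * (1 - p) / (m - 1) < σ)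
    (hN : 0 ≤ N) : N * yP2 m p σ N < 1 := by
  have hL := alphaC_denom_pos hm hσ
  have hM : 0 < m * N - N + 2 := by nlinarith
  rw [yP2, alphaC, mul_one_div, div_lt_one (by positivity [sigma_add_two_pos hm hp hσ]),
    div_mul_eq_mul_div, lt_div_iff₀ hL]
  nlinarith [sigma_add_two_pos hm hp hσ]

theorem dotY_xP2_yP2 (hm : 1 < m) (hp : p < 1) (hσ : 2 * (1 - p) / (m - 1) < σ) (hN : 0 ≤ N) :
    PSSyst1.dotY N (betaC m p σ / alphaC m p σ) (xP2 m p σ N) (yP2 m p σ N) 0 = 0 := by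
  have hL := (alphaC_denom_pos hm hσ).ne'
  have hσ2 := (sigma_add_two_pos hm hp hσ).ne'
  have hM : m * N - N + 2 ≠ 0 := by nlinarith
  unfold PSSyst1.dotY xP2 yP2 betaC alphaC
  field_simp
  ring

end P2

theorem region_below_P2_positively_invariant_general (m p σ : ℝ) (N : ℕ) (hm : 1 < m) (hp1 : p < 1)
    (hσ : 2 * (1 - p) / (m - 1) < σ)
    (T : WithTop ℝ)
    (D : Set ℝ) (hD : D = {t : ℝ | 0 ≤ t ∧ (t : WithTop ℝ) < T})
    (X Y Z : ℝ → ℝ)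
    (hXnn : ∀ t ∈ D, 0 ≤ X t) (hZnn : ∀ t ∈ D, 0 ≤ Z t)
    (hdX : ∀ t ∈ D, HasDerivWithinAt X (X t * ((m - 1) * Y t - 2 * X t)) D t)
    (hdY : ∀ t ∈ D, HasDerivWithinAt Y
      (-(Y t) ^ 2 - betaC m p σ / alphaC m p σ * Y t + X t - (N : ℝ) * X t * Y t - Z t) D t)
    (hdZ : ∀ t ∈ D, HasDerivWithinAt Z (Z t * ((m + p - 2) * Y t + (σ - 2) * X t)) D t)
    (hX0 : X 0 < (m - 1) / (2 * alphaC m p σ * (m * (N : ℝ) - (N : ℝ) + 2)))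
    (hY0 : Y 0 < 1 / (alphaC m p σ * (m * (N : ℝ) - (N : ℝ) + 2))) :
    ∀ t ∈ D, X t < (m - 1) / (2 * alphaC m p σ * (m * (N : ℝ) - (N : ℝ) + 2)) ∧
      Y t < 1 / (alphaC m p σ * (m * (N : ℝ) - (N : ℝ) + 2)) := by
  intro t ht
  subst hD
  obtain ⟨ht₀, htT⟩ := ht
  have hsub : Icc 0 t ⊆ {t : ℝ | 0 ≤ t ∧ (t : WithTop ℝ) < T} := fun s hs =>
    ⟨hs.1, (WithTop.coe_le_coe.2 hs.2).trans_lt htT⟩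
  have hsol : PSSyst1.IsSolutionOn m p σ N (betaC m p σ / alphaC m p σ) X Y Z (Icc 0 t) :=
    fun s hs => ⟨(hdX s (hsub hs)).mono hsub, (hdY s (hsub hs)).mono hsub,
      (hdZ s (hsub hs)).mono hsub⟩
  have hN : (0 : ℝ) ≤ N := N.cast_nonneg
  exact hsol.lt_of_lt_initial ht₀ hm (xP2_pos hm hp1 hσ hN) sub_one_mul_yP2
    (dotY_xP2_yP2 hm hp1 hσ hN) (mul_yP2_lt_one hm hp1 hσ hN) (fun s hs => hXnn s (hsub hs))
    (fun s hs => hZnn s (hsub hs)) hX0 hY0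

theorem region_below_P2_positively_invariant (m p σ : ℝ) (N : ℕ) (hm : 1 < m) (hp0 : 0 < p) (hp1 : p < 1)
    (hσ : 2 * (1 - p) / (m - 1) < σ) (hN : 1 ≤ N)
    (T : WithTop ℝ) (hT : 0 < T)
    (D : Set ℝ) (hD : D = {t : ℝ | 0 ≤ t ∧ (t : WithTop ℝ) < T})
    (X Y Z : ℝ → ℝ)
    (hXnn : ∀ t ∈ D, 0 ≤ X t) (hZnn : ∀ t ∈ D, 0 ≤ Z t)
    (hdX : ∀ t ∈ D, HasDerivWithinAt X (X t * ((m - 1) * Y t - 2 * X t)) D t)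
    (hdY : ∀ t ∈ D, HasDerivWithinAt Y
      (-(Y t) ^ 2 - betaC m p σ / alphaC m p σ * Y t + X t - (N : ℝ) * X t * Y t - Z t) D t)
    (hdZ : ∀ t ∈ D, HasDerivWithinAt Z (Z t * ((m + p - 2) * Y t + (σ - 2) * X t)) D t)
    (hX0 : X 0 < (m - 1) / (2 * alphaC m p σ * (m * (N : ℝ) - (N : ℝ) + 2)))
    (hY0 : Y 0 < 1 / (alphaC m p σ * (m * (N : ℝ) - (N : ℝ) + 2))) :
    ∀ t ∈ D, X t < (m - 1) / (2 * alphaC m p σ * (m * (N : ℝ) - (N : ℝ) + 2)) ∧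
      Y t < 1 / (alphaC m p σ * (m * (N : ℝ) - (N : ℝ) + 2)) :=
  region_below_P2_positively_invariant_general m p σ N hm hp1 hσ T D hD X Y Z hXnn hZnn hdX hdY hdZ
    hX0 hY0
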